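/- Let f : ℝ → ℝ be continuously differentiable with f and f' bounded, and suppose f' is Hölder continuous with exponent ς ∈ (0,1] and constant L ≥ 0. Then for every x ∈ ℝ, the limit as ε ↓ 0 of −∫_{−∞}^{∞} f(y)·(∂/∂y) δ_ε(y − x) dy exists and equals f'(x). -/

import Mathlib

open MeasureTheory Real Filter Topology

/-- Gaussian approximation of the delta function:
`δ_ε(u) = (1/(ε√(2π))) · exp(−u²/(2ε²))`. -/
noncomputable def deltaEps (ε u : ℝ) : ℝ :=
  (1 / (ε * Real.sqrt (2 * Real.pi))) * Real.exp (-(u ^ 2) / (2 * ε ^ 2))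

/-!
Integrating by parts moves the derivative from the kernel onto `f`, turning the expression into
`∫ f'(y) δ_ε(y - x) dy`. As `δ_ε` has unit mass, its distance to `f'(x)` is at most
`∫ |f'(y) - f'(x)| δ_ε(y - x) dy ≤ L ∫ |u|^ς δ_ε(u) du`, and the substitution `u = ε t` shows that
this bound equals `L ε^ς ∫ |t|^ς δ_1(t) dt`, which tends to `0` with `ε`.
-/

lemma deltaEps_nonneg {ε : ℝ} (hε : 0 ≤ ε) (u : ℝ) : 0 ≤ deltaEps ε u := by
  unfold deltaEps
  positivity

lemma continuous_deltaEps (ε : ℝ) : Continuous (deltaEps ε) := by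
  unfold deltaEps
  fun_prop

lemma deltaEps_eq_mul_exp_neg_mul_sq (ε u : ℝ) :
    deltaEps ε u = 1 / (ε * √(2 * π)) * exp (-(2 * ε ^ 2)⁻¹ * u ^ 2) := by
  unfold deltaEps
  ring_nf

lemma integrable_deltaEps {ε : ℝ} (hε : 0 < ε) : Integrable (deltaEps ε) := by
  rw [funext (deltaEps_eq_mul_exp_neg_mul_sq ε)]
  exact (integrable_exp_neg_mul_sq (by positivity : (0 : ℝ) < (2 * ε ^ 2)⁻¹)).const_mul _

lemma integrable_mul_deltaEps {ε : ℝ} (hε : 0 < ε) : Integrable fun u ↦ u * deltaEps ε u := by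
  refine ((integrable_mul_exp_neg_mul_sq (by positivity : (0 : ℝ) < (2 * ε ^ 2)⁻¹)).const_mul
    (1 / (ε * √(2 * π)))).congr (.of_forall fun u ↦ ?_)
  simp only [deltaEps_eq_mul_exp_neg_mul_sq]
  ring

lemma integrable_abs_rpow_mul_deltaEps {ε ς : ℝ} (hε : 0 < ε) (hς : ς ∈ Set.Icc 0 1) :
    Integrable fun u ↦ |u| ^ ς * deltaEps ε u := by
  refine ((integrable_deltaEps hε).add (integrable_mul_deltaEps hε).norm).mono'
    ((continuous_abs.rpow_const fun _ ↦ Or.inr hς.1).mul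
      (continuous_deltaEps ε)).aestronglyMeasurable (.of_forall fun u ↦ ?_)
  have hδ := deltaEps_nonneg hε.le u
  have hpow : |u| ^ ς ≤ 1 + |u| := by
    rcases le_total |u| 1 with hu | hu
    · linarith [rpow_le_one (abs_nonneg u) hu hς.1, abs_nonneg u]
    · calc |u| ^ ς ≤ |u| ^ (1 : ℝ) := rpow_le_rpow_of_exponent_le hu hς.2
        _ ≤ 1 + |u| := by rw [rpow_one]; linarith
  rw [norm_mul, norm_of_nonneg hδ, norm_of_nonneg (by positivity), Pi.add_apply, norm_mul,
    norm_of_nonneg hδ, Real.norm_eq_abs, ← one_add_mul]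
  exact mul_le_mul_of_nonneg_right hpow hδ

lemma integral_deltaEps {ε : ℝ} (hε : 0 < ε) : ∫ u, deltaEps ε u = 1 := by
  simp_rw [deltaEps_eq_mul_exp_neg_mul_sq]
  rw [integral_const_mul, integral_gaussian,
    show π / (2 * ε ^ 2)⁻¹ = ε ^ 2 * (2 * π) by field_simp, sqrt_mul (sq_nonneg ε),
    sqrt_sq hε.le]
  field_simp

lemma deltaEps_mul_left {ε : ℝ} (hε : 0 < ε) (t : ℝ) :
    deltaEps ε (ε * t) = ε⁻¹ * deltaEps 1 t := by
  unfold deltaEps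
  rw [show -(ε * t) ^ 2 / (2 * ε ^ 2) = -t ^ 2 / (2 * 1 ^ 2) by field_simp]
  field_simp

lemma integral_abs_rpow_mul_deltaEps {ε : ℝ} (hε : 0 < ε) (ς : ℝ) :
    ∫ u, |u| ^ ς * deltaEps ε u = ε ^ ς * ∫ t, |t| ^ ς * deltaEps 1 t := by
  have hscale : ∀ t,
      |ε * t| ^ ς * deltaEps ε (ε * t) = ε⁻¹ * (ε ^ ς * (|t| ^ ς * deltaEps 1 t)) := by
    intro t
    rw [abs_mul, mul_rpow (abs_nonneg ε) (abs_nonneg t), abs_of_pos hε, deltaEps_mul_left hε]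
    ring
  have h := Measure.integral_comp_mul_left (fun u ↦ |u| ^ ς * deltaEps ε u) ε
  simp only [hscale, integral_const_mul, abs_of_pos (inv_pos.2 hε), smul_eq_mul] at h
  exact (mul_left_cancel₀ (inv_ne_zero hε.ne') h).symm

lemma hasDerivAt_deltaEps (ε u : ℝ) :
    HasDerivAt (deltaEps ε) (-(ε ^ 2)⁻¹ * (u * deltaEps ε u)) u := by
  have h : HasDerivAt (fun y ↦ -(y ^ 2) / (2 * ε ^ 2)) (-(2 * u) / (2 * ε ^ 2)) u := by
    simpa using (hasDerivAt_pow 2 u).neg.div_const (2 * ε ^ 2)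
  exact (h.exp.const_mul _).congr_deriv (by unfold deltaEps; ring)

lemma integral_mul_deriv_eq_neg_integral_deriv_mul_of_bounded {f f' φ φ' : ℝ → ℝ} {M M' : ℝ}
    (hf : ∀ y, HasDerivAt f (f' y) y) (hφ : ∀ y, HasDerivAt φ (φ' y) y)
    (hf' : AEStronglyMeasurable f') (hφ_int : Integrable φ) (hφ'_int : Integrable φ')
    (hfM : ∀ y, |f y| ≤ M) (hf'M : ∀ y, |f' y| ≤ M') :
    ∫ y, f y * φ' y = -∫ y, f' y * φ y := by
  have hf_meas : AEStronglyMeasurable f :=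
    (continuous_iff_continuousAt.2 fun y ↦ (hf y).continuousAt).aestronglyMeasurable
  exact integral_mul_deriv_eq_deriv_mul_of_integrable (fun y _ ↦ hf y) (fun y _ ↦ hφ y)
    (hφ'_int.bdd_mul hf_meas (.of_forall hfM)) (hφ_int.bdd_mul hf' (.of_forall hf'M))
    (hφ_int.bdd_mul hf_meas (.of_forall hfM))

section holder

variable {g : ℝ → ℝ} {ς L M x : ℝ}

lemma abs_integral_mul_deltaEps_sub_le (hg : AEStronglyMeasurable g) (hgM : ∀ y, |g y| ≤ M)
    (hς : ς ∈ Set.Icc 0 1) (hholder : ∀ y, |g y - g x| ≤ L * |y - x| ^ ς) {ε : ℝ} (hε : 0 < ε) :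
    |(∫ y, g y * deltaEps ε (y - x)) - g x| ≤ L * (∫ t, |t| ^ ς * deltaEps 1 t) * ε ^ ς := by
  have hδ : Integrable fun y ↦ deltaEps ε (y - x) := (integrable_deltaEps hε).comp_sub_right x
  have hunit : ∫ y, deltaEps ε (y - x) = 1 :=
    (integral_sub_right_eq_self (deltaEps ε) x).trans (integral_deltaEps hε)
  have hdiff : (∫ y, g y * deltaEps ε (y - x)) - g x
      = ∫ y, (g y - g x) * deltaEps ε (y - x) := by
    simp_rw [sub_mul]
    rw [integral_sub (hδ.bdd_mul hg (.of_forall hgM)) (hδ.const_mul _), integral_const_mul,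
      hunit, mul_one]
  have hpointwise : ∀ y, ‖(g y - g x) * deltaEps ε (y - x)‖
      ≤ L * (|y - x| ^ ς * deltaEps ε (y - x)) := fun y ↦ by
    rw [Real.norm_eq_abs, abs_mul, abs_of_nonneg (deltaEps_nonneg hε.le _), ← mul_assoc]
    exact mul_le_mul_of_nonneg_right (hholder y) (deltaEps_nonneg hε.le _)
  rw [hdiff, ← Real.norm_eq_abs]
  refine (norm_integral_le_of_norm_le
    (((integrable_abs_rpow_mul_deltaEps hε hς).comp_sub_right x).const_mul L)
    (.of_forall hpointwise)).trans_eq ?_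
  rw [integral_const_mul, integral_sub_right_eq_self (fun u ↦ |u| ^ ς * deltaEps ε u) x,
    integral_abs_rpow_mul_deltaEps hε]
  ring

lemma tendsto_integral_mul_deltaEps (hg : AEStronglyMeasurable g) (hgM : ∀ y, |g y| ≤ M)
    (hς : ς ∈ Set.Ioc 0 1) (hholder : ∀ y, |g y - g x| ≤ L * |y - x| ^ ς) :
    Tendsto (fun ε ↦ ∫ y, g y * deltaEps ε (y - x)) (𝓝[>] 0) (𝓝 (g x)) := by
  have hrate : Tendsto (fun ε : ℝ ↦ L * (∫ t, |t| ^ ς * deltaEps 1 t) * ε ^ ς) (𝓝[>] 0) (𝓝 0) := by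
    have h := ((continuous_rpow_const hς.1.le).tendsto' 0 0 (zero_rpow hς.1.ne')).const_mul
      (L * ∫ t, |t| ^ ς * deltaEps 1 t)
    rw [mul_zero] at h
    exact h.mono_left nhdsWithin_le_nhds
  rw [tendsto_iff_norm_sub_tendsto_zero]
  refine squeeze_zero_norm' ?_ hrate
  filter_upwards [self_mem_nhdsWithin] with ε hε
  rw [norm_norm]
  exact abs_integral_mul_deltaEps_sub_le hg hgM (Set.Ioc_subset_Icc_self hς) hholder hε

end holder

theorem gaussian_mollification_deriv_tendsto_general
    (f : ℝ → ℝ) (ς L : ℝ) (hς : ς ∈ Set.Ioc (0 : ℝ) 1)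
    (hf : ContDiff ℝ 1 f)
    (hbdd : ∃ M : ℝ, ∀ x : ℝ, |f x| ≤ M)
    (hbdd' : ∃ M : ℝ, ∀ x : ℝ, |deriv f x| ≤ M)
    (hholder : ∀ y₁ y₂ : ℝ, |deriv f y₁ - deriv f y₂| ≤ L * |y₁ - y₂| ^ ς) :
    ∀ x : ℝ,
      Tendsto
        (fun ε : ℝ => -(∫ y : ℝ, f y * deriv (fun y' : ℝ => deltaEps ε (y' - x)) y))
        (𝓝[>] 0) (𝓝 (deriv f x)) := by
  intro x
  obtain ⟨M, hM⟩ := hbdd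
  obtain ⟨M', hM'⟩ := hbdd'
  have hfd : ∀ y, HasDerivAt f (deriv f y) y := fun y ↦
    (hf.differentiable one_ne_zero y).hasDerivAt
  refine (tendsto_integral_mul_deltaEps (measurable_deriv f).aestronglyMeasurable hM' hς
    fun y ↦ hholder y x).congr' ?_
  filter_upwards [self_mem_nhdsWithin] with ε (hε : 0 < ε)
  have hδ' : ∀ y, HasDerivAt (fun y' ↦ deltaEps ε (y' - x))
      (-(ε ^ 2)⁻¹ * ((y - x) * deltaEps ε (y - x))) y := fun y ↦
    (hasDerivAt_deltaEps ε (y - x)).comp_sub_const y x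
  simp_rw [fun y ↦ (hδ' y).deriv]
  rw [integral_mul_deriv_eq_neg_integral_deriv_mul_of_bounded hfd hδ'
    (measurable_deriv f).aestronglyMeasurable ((integrable_deltaEps hε).comp_sub_right x)
    (((integrable_mul_deltaEps hε).const_mul _).comp_sub_right x) hM hM', neg_neg]

/-- For `f` continuously differentiable with `f`, `f'` bounded and `f'`
Hölder continuous (exponent `ς ∈ (0,1]`, constant `L ≥ 0`), the limit as `ε ↓ 0` of
`−∫ f(y) ∂_y δ_ε(y − x) dy` exists and equals `f'(x)`. -/
theorem gaussian_mollification_deriv_tendsto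
    (f : ℝ → ℝ) (ς L : ℝ) (hς : ς ∈ Set.Ioc (0 : ℝ) 1) (hL : 0 ≤ L)
    (hf : ContDiff ℝ 1 f)
    (hbdd : ∃ M : ℝ, ∀ x : ℝ, |f x| ≤ M)
    (hbdd' : ∃ M : ℝ, ∀ x : ℝ, |deriv f x| ≤ M)
    (hholder : ∀ y₁ y₂ : ℝ, |deriv f y₁ - deriv f y₂| ≤ L * |y₁ - y₂| ^ ς) :
    ∀ x : ℝ,
      Tendsto
        (fun ε : ℝ => -(∫ y : ℝ, f y * deriv (fun y' : ℝ => deltaEps ε (y' - x)) y))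
        (𝓝[>] 0) (𝓝 (deriv f x)) :=
  gaussian_mollification_deriv_tendsto_general f ς L hς hf hbdd hbdd' hholder
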